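/- arXiv:1501.07814 — 2 statements merged into one kernel-verified Lean document; each statement's English description precedes it below -/
import Mathlib

section
/- Suppose all weighted constraints in C are user-independent. Then min over all complete plans π of w(π) = w_C(π) + w_A(π) equals min over all patterns P (partitions of S) of [ w_C(π_P) + min over injections f from the blocks of P into U of Σ_{p ∈ P} ω(p, f(p)) ], where π_P is any plan with pattern P. -/
/-!
Two plans with the same pattern differ by a permutation of the users (match the user of each
block under one plan with its user under the other), so a user-independent constraint weight
depends only on the pattern. The minimisation over all plans can therefore be carried out
pattern by pattern: within a pattern `w_C` is fixed and only `w_A` is minimised.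
-/

/-- The pattern of a plan: the partition of `S` into nonempty preimage sets. -/
def pattern {S U : Type*} (π : S → U) : Set (Set S) :=
  {T | T.Nonempty ∧ ∃ u, T = π ⁻¹' {u}}

section Pattern

variable {S U : Type*} {π π' : S → U}

theorem preimage_singleton_apply_eq_of_pattern_eq (h : pattern π = pattern π') (s : S) :
    π ⁻¹' {π s} = π' ⁻¹' {π' s} := by
  have hmem : π ⁻¹' {π s} ∈ pattern π := ⟨⟨s, rfl⟩, π s, rfl⟩
  obtain ⟨-, u, hu⟩ := h ▸ hmem
  have hs : π' s = u := show s ∈ π' ⁻¹' {u} from hu ▸ rfl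
  rw [hu, hs]

theorem apply_eq_apply_iff_of_pattern_eq (h : pattern π = pattern π') (s t : S) :
    π s = π t ↔ π' s = π' t := by
  have := congrArg (t ∈ ·) (preimage_singleton_apply_eq_of_pattern_eq h s)
  simpa [eq_comm] using this

theorem exists_perm_comp_eq_of_pattern_eq [Finite U] (h : pattern π = pattern π') :
    ∃ θ : Equiv.Perm U, θ ∘ π = π' := by
  classical
  let e : Set.range π ≃ Set.range π' :=
    (Setoid.quotientKerEquivRange π).symm.trans
      ((Quotient.congrRight (apply_eq_apply_iff_of_pattern_eq h)).trans
        (Setoid.quotientKerEquivRange π'))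
  refine ⟨e.extendSubtype, funext fun s => ?_⟩
  rw [Function.comp_apply, e.extendSubtype_apply_of_mem _ ⟨s, rfl⟩]
  have hs : (Setoid.quotientKerEquivRange π).symm ⟨π s, s, rfl⟩ = ⟦s⟧ :=
    (Equiv.symm_apply_eq _).mpr (Subtype.ext rfl)
  simp only [e, Equiv.trans_apply, hs]
  rfl

theorem eq_of_pattern_eq_of_perm_invariant {β : Type*} [Finite U] {F : (S → U) → β}
    (hF : ∀ (θ : Equiv.Perm U) (π : S → U), F (θ ∘ π) = F π)
    (h : pattern π = pattern π') : F π = F π' := by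
  obtain ⟨θ, rfl⟩ := exists_perm_comp_eq_of_pattern_eq h
  exact (hF θ π).symm

end Pattern

theorem sInf_add_eq_sInf_add_sInf {α : Type*} (r : α → α → Prop) (hr : ∀ a, r a a)
    (f g : α → ℕ) (hf : ∀ a b, r a b → f a = f b) :
    sInf {w | ∃ a, w = f a + g a} =
      sInf {w | ∃ a, w = f a + sInf {w' | ∃ b, r a b ∧ w' = g b}} := by
  rcases isEmpty_or_nonempty α with _ | ⟨⟨a₀⟩⟩
  · simp
  apply le_antisymm
  · obtain ⟨a, ha⟩ :=
      Nat.sInf_mem (s := {w | ∃ a, w = f a + sInf {w' | ∃ b, r a b ∧ w' = g b}}) ⟨_, a₀, rfl⟩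
    obtain ⟨b, hab, hb⟩ :=
      Nat.sInf_mem (s := {w' | ∃ b, r a b ∧ w' = g b}) ⟨_, a, hr a, rfl⟩
    rw [ha, hb, hf a b hab]
    exact Nat.sInf_le ⟨b, rfl⟩
  · obtain ⟨a, ha⟩ := Nat.sInf_mem (s := {w | ∃ a, w = f a + g a}) ⟨_, a₀, rfl⟩
    rw [ha]
    refine le_trans (Nat.sInf_le ⟨a, rfl⟩) ?_
    gcongr
    exact Nat.sInf_le ⟨a, hr a, rfl⟩

theorem min_weight_eq_min_over_patterns_general {S U : Type*} [Fintype S] [Fintype U]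
    [DecidableEq U]
    (wC : (S → U) → ℕ)
    (hUI : ∀ (θ : Equiv.Perm U) (π : S → U), wC (θ ∘ π) = wC π)
    (ω : Finset S → U → ℕ) :
    sInf {w | ∃ π : S → U,
        w = wC π + ∑ u, ω (Finset.univ.filter fun s => π s = u) u} =
    sInf {w | ∃ π : S → U,
        w = wC π + sInf {w' | ∃ π' : S → U, pattern π = pattern π' ∧
          w' = ∑ u, ω (Finset.univ.filter fun s => π' s = u) u}} :=
  sInf_add_eq_sInf_add_sInf (fun π π' => pattern π = pattern π') (fun _ => rfl) wC _
    fun _ _ => eq_of_pattern_eq_of_perm_invariant hUI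

/-- with user-independent weighted constraints, the minimum total
weight over all complete plans equals the minimum, over all patterns, of the
constraint weight of the pattern plus the minimum authorisation weight over
plans with that pattern. -/
theorem min_weight_eq_min_over_patterns {S U : Type*} [Fintype S] [Fintype U]
    [DecidableEq S] [DecidableEq U]
    (hcard : Fintype.card S ≤ Fintype.card U)
    (wC : (S → U) → ℕ)
    (hUI : ∀ (θ : Equiv.Perm U) (π : S → U), wC (θ ∘ π) = wC π)
    (ω : Finset S → U → ℕ) (hω : ∀ u, ω ∅ u = 0) :
    sInf {w | ∃ π : S → U,
        w = wC π + ∑ u, ω (Finset.univ.filter fun s => π s = u) u} =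
    sInf {w | ∃ π : S → U,
        w = wC π + sInf {w' | ∃ π' : S → U, pattern π = pattern π' ∧
          w' = ∑ u, ω (Finset.univ.filter fun s => π' s = u) u}} :=
  min_weight_eq_min_over_patterns_general wC hUI ω
end

section
/- Let c be a counting constraint with scope T and weight w_c(π) = ω_c(|π(T)|), and let P be a pattern (partition of a subset T(P) ⊆ S). Define q = |{p ∈ P : p ∩ T ≠ ∅}| and a = |T ∩ T(P)|, and define recursively l(q, a) = ω_c(q) if a = |T| and l(q, a) = min{l(q, a+1), l(q+1, a+1)} otherwise. Then for every complete plan π extending some plan with pattern P (i.e., whose pattern restricted to T(P) refines to P), w_c(π) ≥ l(q, a). -/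
/-!
Let `B = ⋃ P`. Since `π` extends `P`, it is constant on each block and separates distinct blocks,
so `π(T ∩ B)` has exactly `q` elements, one per block meeting `T`; the `|T| - a` steps of
`T \ B` add at most `|T| - a` further users. Hence `q ≤ |π(T)| ≤ q + (|T| - a)`, and `l(q, a)` is
the minimum of `ω` over exactly this range, since each recursive step of `l` decides whether one
more step of `T` brings a new user.
-/

/-- The recursive lower-bound function `l(q, a)` for a counting constraint with
scope of cardinality `tT`. -/
def lb (ω : ℕ → ℕ) (tT q a : ℕ) : ℕ :=
  if h : tT ≤ a then ω q else min (lb ω tT q (a + 1)) (lb ω tT (q + 1) (a + 1))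
termination_by tT - a
decreasing_by all_goals omega

theorem lb_le_of_le_of_add_le (ω : ℕ → ℕ) {tT q a m : ℕ} (hqm : q ≤ m) (hm : m + a ≤ q + tT) :
    lb ω tT q a ≤ ω m := by
  induction q, a using lb.induct tT generalizing m with
  | case1 q a hdone =>
    rw [lb, dif_pos hdone, show m = q by omega]
  | case2 q a hstep ih_same ih_new =>
    rw [lb, dif_neg hstep]
    by_cases hroom : m + (a + 1) ≤ q + tT
    · exact (min_le_left _ _).trans (ih_same hqm hroom)
    · exact (min_le_right _ _).trans (ih_new (by omega) (by omega))

theorem Finset.card_image_le_card_image_inter_add_card_sdiff {α β : Type*} [DecidableEq α]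
    [DecidableEq β] (f : α → β) (s t : Finset α) :
    (s.image f).card ≤ ((s ∩ t).image f).card + (s \ t).card :=
  calc (s.image f).card = ((s ∩ t).image f ∪ (s \ t).image f).card := by
        rw [← Finset.image_union, ← Finset.inf_eq_inter, ← Finset.sup_eq_union, sup_inf_sdiff]
    _ ≤ ((s ∩ t).image f).card + ((s \ t).image f).card := Finset.card_union_le _ _
    _ ≤ ((s ∩ t).image f).card + (s \ t).card := by gcongr; exact Finset.card_image_le

section Extension

variable {S U : Type*} [DecidableEq S] [DecidableEq U] {P : Finset (Finset S)} {π : S → U}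

theorem card_image_inter_biUnion_eq_card_filter (T : Finset S)
    (hdisj : ∀ b ∈ P, ∀ b' ∈ P, b ≠ b' → Disjoint b b')
    (hext : ∀ s ∈ P.biUnion id, ∀ t ∈ P.biUnion id, ((∃ b ∈ P, s ∈ b ∧ t ∈ b) ↔ π s = π t)) :
    ((T ∩ P.biUnion id).image π).card = (P.filter fun b => (b ∩ T).Nonempty).card := by
  have mem_biUnion {b s} (hb : b ∈ P) (hs : s ∈ b) : s ∈ P.biUnion id :=
    Finset.mem_biUnion.mpr ⟨b, hb, hs⟩
  have eq_of_mem_of_mem {b c s} (hb : b ∈ P) (hc : c ∈ P) (hsb : s ∈ b) (hsc : s ∈ c) : c = b :=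
    by_contra fun hcb => Finset.disjoint_left.mp (hdisj c hc b hb hcb) hsc hsb
  symm
  refine Finset.card_bij (fun b hb => π (Finset.mem_filter.mp hb).2.choose) ?_ ?_ ?_
  · intro b hb
    obtain ⟨hsb, hsT⟩ := Finset.mem_inter.mp (Finset.mem_filter.mp hb).2.choose_spec
    exact Finset.mem_image_of_mem π
      (Finset.mem_inter.mpr ⟨hsT, mem_biUnion (Finset.mem_filter.mp hb).1 hsb⟩)
  · intro b hb b' hb' heq
    have hbP := (Finset.mem_filter.mp hb).1
    have hb'P := (Finset.mem_filter.mp hb').1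
    have hsb := (Finset.mem_inter.mp (Finset.mem_filter.mp hb).2.choose_spec).1
    have hsb' := (Finset.mem_inter.mp (Finset.mem_filter.mp hb').2.choose_spec).1
    obtain ⟨c, hc, hsc, hsc'⟩ := (hext _ (mem_biUnion hbP hsb) _ (mem_biUnion hb'P hsb')).mpr heq
    rw [← eq_of_mem_of_mem hbP hc hsb hsc, eq_of_mem_of_mem hb'P hc hsb' hsc']
  · intro u hu
    obtain ⟨s, hs, rfl⟩ := Finset.mem_image.mp hu
    obtain ⟨hsT, hsB⟩ := Finset.mem_inter.mp hs
    obtain ⟨b, hbP, hsb⟩ := Finset.mem_biUnion.mp hsB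
    have hb : b ∈ P.filter fun b => (b ∩ T).Nonempty :=
      Finset.mem_filter.mpr ⟨hbP, s, Finset.mem_inter.mpr ⟨hsb, hsT⟩⟩
    have hrep := (Finset.mem_inter.mp (Finset.mem_filter.mp hb).2.choose_spec).1
    exact ⟨b, hb, (hext _ (mem_biUnion hbP hrep) s hsB).mp ⟨b, hbP, hrep, hsb⟩⟩

end Extension

theorem lb_le_weight_of_extension_general {S U : Type*}
    [DecidableEq S] [DecidableEq U]
    (T : Finset S) (ω : ℕ → ℕ)
    (P : Finset (Finset S))
    (hdisj : ∀ b ∈ P, ∀ b' ∈ P, b ≠ b' → Disjoint b b')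
    (π : S → U)
    (hext : ∀ s ∈ P.biUnion id, ∀ t ∈ P.biUnion id,
      ((∃ b ∈ P, s ∈ b ∧ t ∈ b) ↔ π s = π t)) :
    lb ω T.card ((P.filter fun b => (b ∩ T).Nonempty).card) ((T ∩ P.biUnion id).card)
      ≤ ω ((T.image π).card) := by
  have hq := card_image_inter_biUnion_eq_card_filter T hdisj hext
  have hlower : ((T ∩ P.biUnion id).image π).card ≤ (T.image π).card :=
    Finset.card_le_card (Finset.image_subset_image Finset.inter_subset_left)
  have hupper := Finset.card_image_le_card_image_inter_add_card_sdiff π T (P.biUnion id)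
  have hsplit := Finset.card_inter_add_card_sdiff T (P.biUnion id)
  exact lb_le_of_le_of_add_le ω (by omega) (by omega)

/-- `l(q, a)` is a lower bound on the weight of any complete plan
extending a plan with pattern `P`, where `q` is the number of blocks of `P`
meeting the scope `T` and `a = |T ∩ T(P)|`. -/
theorem lb_le_weight_of_extension {S U : Type*} [Fintype S] [Fintype U]
    [DecidableEq S] [DecidableEq U]
    (hU : Fintype.card S ≤ Fintype.card U)
    (T : Finset S) (ω : ℕ → ℕ)
    (P : Finset (Finset S))
    (hne : ∀ b ∈ P, b.Nonempty)
    (hdisj : ∀ b ∈ P, ∀ b' ∈ P, b ≠ b' → Disjoint b b')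
    (π : S → U)
    (hext : ∀ s ∈ P.biUnion id, ∀ t ∈ P.biUnion id,
      ((∃ b ∈ P, s ∈ b ∧ t ∈ b) ↔ π s = π t)) :
    lb ω T.card ((P.filter fun b => (b ∩ T).Nonempty).card) ((T ∩ P.biUnion id).card)
      ≤ ω ((T.image π).card) :=
  lb_le_weight_of_extension_general T ω P hdisj π hext
end
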